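/- Let n be a finite-dimensional nilpotent Lie algebra. The contravariant functor sending an n-torsion module V (with V = colim V^{n^m}, V^n finite-dimensional) to its full dual V*, and the functor sending an n-adically complete module W (with W = lim W/n^m W, W/nW finite-dimensional) to its continuous dual W^{cont-*} = {φ ∈ W* : φ(n^m W)=0 for some m}, are mutually inverse anti-equivalences between the category M_tor(n) of torsion modules and the category M_com(n) of complete modules. -/

import Mathlib

open UniversalEnvelopingAlgebra

attribute [local instance 100] LieRing.ofAssociativeRing

noncomputable def augSpan (k : Type) [Field k] (L : Type) [LieRing L] [LieAlgebra k L] :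
    Submodule k (UniversalEnvelopingAlgebra k L) :=
  Submodule.span k (Set.range (ι k : L →ₗ⁅k⁆ UniversalEnvelopingAlgebra k L))

noncomputable def smulSub (k : Type) [Field k] (L : Type) [LieRing L] [LieAlgebra k L]
    {V : Type} [AddCommGroup V] [Module (UniversalEnvelopingAlgebra k L) V]
    [Module k V] [IsScalarTower k (UniversalEnvelopingAlgebra k L) V]
    (N : Submodule k (UniversalEnvelopingAlgebra k L)) (W : Submodule k V) : Submodule k V :=
  Submodule.span k {z : V | ∃ x ∈ N, ∃ w ∈ W, z = x • w}

/-- `n^m V`. -/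
noncomputable def nPow (k : Type) [Field k] (L : Type) [LieRing L] [LieAlgebra k L]
    (V : Type) [AddCommGroup V] [Module (UniversalEnvelopingAlgebra k L) V]
    [Module k V] [IsScalarTower k (UniversalEnvelopingAlgebra k L) V] (m : ℕ) :
    Submodule k V :=
  smulSub k L ((augSpan k L) ^ m) (⊤ : Submodule k V)

/-- `V^{n^m}`. -/
noncomputable def annN (k : Type) [Field k] (L : Type) [LieRing L] [LieAlgebra k L]
    (V : Type) [AddCommGroup V] [Module (UniversalEnvelopingAlgebra k L) V]
    [Module k V] [IsScalarTower k (UniversalEnvelopingAlgebra k L) V] (m : ℕ) :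
    Submodule k V where
  carrier := {v | ∀ x ∈ (augSpan k L) ^ m, x • v = 0}
  add_mem' := by
    intro a b ha hb x hx
    rw [smul_add, ha x hx, hb x hx, add_zero]
  zero_mem' := by
    intro x hx
    simp
  smul_mem' := by
    intro c v hv x hx
    rw [← smul_comm c x v, hv x hx, smul_zero]

def IsCauchySeq (k : Type) [Field k] (L : Type) [LieRing L] [LieAlgebra k L]
    {V : Type} [AddCommGroup V] [Module (UniversalEnvelopingAlgebra k L) V]
    [Module k V] [IsScalarTower k (UniversalEnvelopingAlgebra k L) V] (v : ℕ → V) : Prop :=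
  ∀ m : ℕ, v (m + 1) - v m ∈ nPow k L V m

/-!
Under the pairing `B : W ≃ V*`, the submodule `n^m W` is exactly the annihilator of `V^{n^m}`.
One inclusion is the contragredient relation. For the other, a basis `b` of `n` embeds
`V / V^{n^{m+1}}` into `(V / V^{n^m})^{dim n}` via `v ↦ (b_i v)_i`, so every functional killing
`V^{n^{m+1}}` is a sum `∑ ψ_i ∘ b_i` with each `ψ_i` killing `V^{n^m}`, and induction on `m`
applies. The same embedding shows that every `V^{n^m}` is finite-dimensional. Hence
`W / n^m W ≅ (V^{n^m})*` is finite-dimensional, a Cauchy sequence in `W` converges to the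
functional agreeing with its `m`-th term on `V^{n^m}`, and a functional on `W` vanishing on
`n^m W` factors through `(V^{n^m})** = V^{n^m}`.
-/

open Module

section LinearAlgebra

theorem Submodule.exists_mem_forall_eq_apply_of_dualAnnihilator_le_ker {K V : Type*} [Field K]
    [AddCommGroup V] [Module K V] (F : Submodule K V) [FiniteDimensional K F]
    (Ψ : Dual K (Dual K V)) (hΨ : F.dualAnnihilator ≤ LinearMap.ker Ψ) :
    ∃ v ∈ F, ∀ χ : Dual K V, Ψ χ = χ v := by
  let Ψ' : Dual K (Dual K F) :=
    F.dualAnnihilator.liftQ Ψ hΨ ∘ₗ (Subspace.quotAnnihilatorEquiv F).symm.toLinearMap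
  refine ⟨(evalEquiv K F).symm Ψ', Submodule.coe_mem _, fun χ => ?_⟩
  have h := apply_evalEquiv_symm_apply K F (F.dualRestrict χ) Ψ'
  rw [Submodule.dualRestrict_apply] at h
  rw [h]
  simp only [Ψ', LinearMap.comp_apply, LinearEquiv.coe_coe, ← Subspace.quotAnnihilatorEquiv_apply,
    LinearEquiv.symm_apply_apply, Submodule.liftQ_apply]

theorem exists_linearMap_eqOn_of_compatible {R M N : Type*} [Semiring R] [AddCommMonoid M]
    [Module R M] [AddCommMonoid N] [Module R N] {F : ℕ → Submodule R M} (hF : Monotone F)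
    (hexh : ∀ x, ∃ m, x ∈ F m) (f : ℕ → M →ₗ[R] N)
    (hf : ∀ m, ∀ x ∈ F m, f (m + 1) x = f m x) :
    ∃ φ : M →ₗ[R] N, ∀ m, ∀ x ∈ F m, φ x = f m x := by
  have stable : ∀ m m', m ≤ m' → ∀ x ∈ F m, f m' x = f m x := by
    intro m m' hm x hx
    induction m', hm using Nat.le_induction with
    | base => rfl
    | succ m' hm ih => rw [hf m' x (hF hm hx), ih]
  have agree : ∀ m m' x, x ∈ F m → x ∈ F m' → f m x = f m' x := fun m m' x hx hx' => by
    rw [← stable m (max m m') (le_max_left _ _) x hx,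
      ← stable m' (max m m') (le_max_right _ _) x hx']
  choose N hN using hexh
  refine ⟨{ toFun := fun x => f (N x) x, map_add' := fun x y => ?_, map_smul' := fun c x => ?_ },
    fun m x hx => agree _ _ x (hN x) hx⟩
  · have hx : x ∈ F (max (N x) (N y)) := hF (le_max_left _ _) (hN x)
    have hy : y ∈ F (max (N x) (N y)) := hF (le_max_right _ _) (hN y)
    simp only [agree _ _ _ (hN _) (add_mem hx hy), agree _ _ _ (hN x) hx, agree _ _ _ (hN y) hy,
      map_add]
  · simp only [agree _ _ _ (hN _) (Submodule.smul_mem _ c (hN x)), map_smul, RingHom.id_apply]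

end LinearAlgebra

section Torsion

variable {k : Type} [Field k] {L : Type} [LieRing L] [LieAlgebra k L]
  {V : Type} [AddCommGroup V] [Module (UniversalEnvelopingAlgebra k L) V] [Module k V]
  [IsScalarTower k (UniversalEnvelopingAlgebra k L) V]

theorem mem_augSpan_iff {x : UniversalEnvelopingAlgebra k L} :
    x ∈ augSpan k L ↔ ∃ y : L, ι k y = x := by
  have h : Set.range (ι k : L →ₗ⁅k⁆ UniversalEnvelopingAlgebra k L) =
      LinearMap.range (ι k : L →ₗ⁅k⁆ UniversalEnvelopingAlgebra k L).toLinearMap :=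
    (LinearMap.coe_range _).symm
  rw [augSpan, h, Submodule.span_eq]
  rfl

theorem annN_zero : annN k L V 0 = ⊥ := by
  refine eq_bot_iff.mpr fun v hv => ?_
  simpa using hv 1 (by rw [pow_zero]; exact Submodule.one_le.mp le_rfl)

theorem mem_annN_succ_iff {m : ℕ} {v : V} :
    v ∈ annN k L V (m + 1) ↔ ∀ y : L, ι k y • v ∈ annN k L V m := by
  constructor
  · intro hv y a ha
    rw [← mul_smul]
    exact hv _ (pow_succ (augSpan k L) m ▸
      Submodule.mul_mem_mul ha (mem_augSpan_iff.mpr ⟨y, rfl⟩))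
  · intro hv u hu
    rw [pow_succ] at hu
    refine Submodule.mul_induction_on hu (fun a ha x hx => ?_) (fun x y hx hy => ?_)
    · obtain ⟨y, rfl⟩ := mem_augSpan_iff.mp hx
      rw [mul_smul]
      exact hv y a ha
    · rw [add_smul, hx, hy, add_zero]

theorem annN_mono : Monotone (annN k L V) := by
  refine monotone_nat_of_le_succ fun m => ?_
  induction m with
  | zero => simp [annN_zero]
  | succ m ih => exact fun v hv => mem_annN_succ_iff.mpr fun y => ih (mem_annN_succ_iff.mp hv y)

variable {I : Type} [Fintype I] (b : Basis I k L)

theorem mem_annN_succ_iff_basis {m : ℕ} {v : V} :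
    v ∈ annN k L V (m + 1) ↔ ∀ i, ι k (b i) • v ∈ annN k L V m := by
  refine mem_annN_succ_iff.trans ⟨fun hv i => hv (b i), fun hv y => ?_⟩
  have hy : ι k y = ∑ i, b.repr y i • ι k (b i) := by
    conv_lhs => rw [← b.sum_repr y]
    simp only [← LieHom.coe_toLinearMap, map_sum, map_smul]
  rw [hy, Finset.sum_smul]
  exact Submodule.sum_mem _ fun i _ => smul_assoc (b.repr y i) (ι k (b i)) v ▸
    Submodule.smul_mem _ _ (hv i)

noncomputable def basisAction : V →ₗ[k] (I → V) :=
  LinearMap.pi fun i => DistribSMul.toLinearMap k V (ι k (b i) : UniversalEnvelopingAlgebra k L)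

theorem ker_basisAction : LinearMap.ker (basisAction (V := V) b) = annN k L V 1 := by
  ext v
  simp [basisAction, mem_annN_succ_iff_basis b, annN_zero, funext_iff]

theorem finiteDimensional_annN [FiniteDimensional k L] [FiniteDimensional k (annN k L V 1)]
    (m : ℕ) : FiniteDimensional k (annN k L V m) := by
  let b := Module.finBasis k L
  induction m with
  | zero => rw [annN_zero]; infer_instance
  | succ m ih =>
    have hmap : (annN k L V (m + 1)).map (basisAction b) ≤
        Submodule.pi Set.univ fun _ => annN k L V m := by
      rintro _ ⟨v, hv, rfl⟩ i -
      exact (mem_annN_succ_iff_basis b).mp hv i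
    have hker : annN k L V (m + 1) ⊓ LinearMap.ker (basisAction b) ≤ annN k L V 1 :=
      inf_le_right.trans_eq (ker_basisAction b)
    rw [← Submodule.fg_iff_finiteDimensional] at ih ⊢
    refine Submodule.fg_of_fg_map_of_fg_inf_ker (basisAction b) ?_ ?_
    · have : FiniteDimensional k (Submodule.pi Set.univ fun (_ : Fin (finrank k L)) =>
          annN k L V m) := (Submodule.fg_iff_finiteDimensional _).mp (Submodule.fg_pi fun _ => ih)
      exact (Submodule.fg_iff_finiteDimensional _).mpr (Submodule.finiteDimensional_of_le hmap)
    · exact (Submodule.fg_iff_finiteDimensional _).mpr (Submodule.finiteDimensional_of_le hker)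

theorem exists_sum_eq_of_mem_dualAnnihilator_annN_succ {m : ℕ} {φ : Dual k V}
    (hφ : φ ∈ (annN k L V (m + 1)).dualAnnihilator) :
    ∃ ψ : I → Dual k V, (∀ i, ψ i ∈ (annN k L V m).dualAnnihilator) ∧
      ∀ v, φ v = ∑ i, ψ i (ι k (b i) • v) := by
  classical
  let β : V →ₗ[k] (I → V ⧸ annN k L V m) := LinearMap.pi fun i =>
    (annN k L V m).mkQ ∘ₗ DistribSMul.toLinearMap k V (ι k (b i) : UniversalEnvelopingAlgebra k L)
  have hker : LinearMap.ker β = annN k L V (m + 1) := by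
    ext v
    simp [β, mem_annN_succ_iff_basis b, funext_iff]
  obtain ⟨g, rfl⟩ : φ ∈ LinearMap.range β.dualMap := by
    rwa [LinearMap.range_dualMap_eq_dualAnnihilator_ker, hker]
  refine ⟨fun i => g ∘ₗ LinearMap.single k _ i ∘ₗ (annN k L V m).mkQ, fun i => ?_, fun v => ?_⟩
  · rw [Submodule.mem_dualAnnihilator]
    intro v hv
    simp [(Submodule.Quotient.mk_eq_zero _).mpr hv]
  · conv_lhs => rw [LinearMap.dualMap_apply, ← Finset.univ_sum_single (β v), map_sum]
    rfl

end Torsion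

section Pairing

variable {k : Type} [Field k] {L : Type} [LieRing L] [LieAlgebra k L]
  {V : Type} [AddCommGroup V] [Module (UniversalEnvelopingAlgebra k L) V] [Module k V]
  [IsScalarTower k (UniversalEnvelopingAlgebra k L) V]
  {W : Type} [AddCommGroup W] [Module (UniversalEnvelopingAlgebra k L) W] [Module k W]

variable (L) in
def IsContragredient (B : W →ₗ[k] Dual k V) : Prop :=
  ∀ (x : L) (w : W) (v : V), B (ι k x • w) v = - B w (ι k x • v)

theorem IsContragredient.apply_smul_eq_zero {B : W →ₗ[k] Dual k V} (hB : IsContragredient L B)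
    {m : ℕ} {u : UniversalEnvelopingAlgebra k L} (hu : u ∈ augSpan k L ^ m) (w : W) {v : V}
    (hv : v ∈ annN k L V m) : B (u • w) v = 0 := by
  induction m generalizing u w v with
  | zero => simp [annN_zero] at hv; simp [hv]
  | succ m ih =>
    rw [pow_succ'] at hu
    refine Submodule.mul_induction_on hu (fun x hx a ha => ?_) (fun x y hx hy => ?_)
    · obtain ⟨y, rfl⟩ := mem_augSpan_iff.mp hx
      rw [mul_smul, hB, ih ha _ (mem_annN_succ_iff.mp hv y), neg_zero]
    · rw [add_smul, map_add, LinearMap.add_apply, hx, hy, add_zero]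

variable [IsScalarTower k (UniversalEnvelopingAlgebra k L) W]

variable (L) in
theorem nPow_zero : nPow k L W 0 = ⊤ := by
  refine eq_top_iff.mpr fun w _ => Submodule.subset_span ?_
  exact ⟨1, by rw [pow_zero]; exact Submodule.one_le.mp le_rfl, w, Submodule.mem_top,
    (one_smul _ w).symm⟩

theorem iota_smul_mem_nPow_succ (y : L) {m : ℕ} {w : W} (hw : w ∈ nPow k L W m) :
    ι k y • w ∈ nPow k L W (m + 1) := by
  induction hw using Submodule.span_induction with
  | mem z hz =>
    obtain ⟨x, hx, t, -, rfl⟩ := hz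
    refine Submodule.subset_span ⟨ι k y * x, ?_, t, Submodule.mem_top, (mul_smul _ _ _).symm⟩
    exact pow_succ' (augSpan k L) m ▸
      Submodule.mul_mem_mul (mem_augSpan_iff.mpr ⟨y, rfl⟩) hx
  | zero => rw [smul_zero]; exact Submodule.zero_mem _
  | add a c _ _ ha hc => rw [smul_add]; exact Submodule.add_mem _ ha hc
  | smul c a _ ha => rw [smul_comm]; exact Submodule.smul_mem _ c ha

namespace IsContragredient

variable {B : W →ₗ[k] Dual k V}

theorem apply_eq_zero (hB : IsContragredient L B) {m : ℕ} {w : W} (hw : w ∈ nPow k L W m)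
    {v : V} (hv : v ∈ annN k L V m) : B w v = 0 := by
  have hle : nPow k L W m ≤ LinearMap.ker (B.flip v) := by
    refine Submodule.span_le.mpr ?_
    rintro _ ⟨u, hu, t, -, rfl⟩
    exact hB.apply_smul_eq_zero hu t hv
  exact hle hw

theorem mem_nPow_of_apply_mem_dualAnnihilator [FiniteDimensional k L] (hB : IsContragredient L B)
    (hbij : Function.Bijective B) {m : ℕ} {w : W}
    (hw : B w ∈ (annN k L V m).dualAnnihilator) : w ∈ nPow k L W m := by
  induction m generalizing w with
  | zero => rw [nPow_zero]; trivial
  | succ m ih =>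
    let b := Module.finBasis k L
    obtain ⟨ψ, hψ, hsum⟩ := exists_sum_eq_of_mem_dualAnnihilator_annN_succ b hw
    choose w' hw' using fun i => hbij.2 (ψ i)
    have hw_eq : w = -∑ i, ι k (b i) • w' i := by
      refine hbij.1 (LinearMap.ext fun v => ?_)
      rw [hsum, map_neg, map_sum, LinearMap.neg_apply, LinearMap.sum_apply]
      simp only [hB _, hw', Finset.sum_neg_distrib, neg_neg]
    rw [hw_eq]
    exact neg_mem <| Submodule.sum_mem _ fun i _ =>
      iota_smul_mem_nPow_succ _ (ih (hw' i ▸ hψ i))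

theorem mem_nPow_iff [FiniteDimensional k L] (hB : IsContragredient L B)
    (hbij : Function.Bijective B) {m : ℕ} {w : W} :
    w ∈ nPow k L W m ↔ B w ∈ (annN k L V m).dualAnnihilator :=
  ⟨fun hw => (Submodule.mem_dualAnnihilator _).mpr fun _ hv => hB.apply_eq_zero hw hv,
    hB.mem_nPow_of_apply_mem_dualAnnihilator hbij⟩

theorem finiteDimensional_quotient_nPow [FiniteDimensional k L]
    [FiniteDimensional k (annN k L V 1)] (hB : IsContragredient L B)
    (hbij : Function.Bijective B) (m : ℕ) : FiniteDimensional k (W ⧸ nPow k L W m) := by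
  have : FiniteDimensional k (annN k L V m) := finiteDimensional_annN m
  let ρ := (annN k L V m).dualRestrict ∘ₗ B
  have hker : LinearMap.ker ρ = nPow k L W m := by
    ext w
    rw [hB.mem_nPow_iff hbij, ← Submodule.dualRestrict_ker_eq_dualAnnihilator]
    rfl
  rw [← hker]
  exact Module.Finite.equiv ρ.quotKerEquivRange.symm

theorem eq_zero_of_forall_mem_nPow (hB : IsContragredient L B)
    (htor : ∀ v : V, ∃ m, v ∈ annN k L V m) (hinj : Function.Injective B) {w : W}
    (hw : ∀ m, w ∈ nPow k L W m) : w = 0 := by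
  refine hinj (LinearMap.ext fun v => ?_)
  obtain ⟨m, hv⟩ := htor v
  rw [map_zero, LinearMap.zero_apply]
  exact hB.apply_eq_zero (hw m) hv

theorem exists_forall_sub_mem_nPow [FiniteDimensional k L] (hB : IsContragredient L B)
    (htor : ∀ v : V, ∃ m, v ∈ annN k L V m) (hbij : Function.Bijective B) {w : ℕ → W}
    (hw : IsCauchySeq k L w) : ∃ x, ∀ m, x - w m ∈ nPow k L W m := by
  obtain ⟨φ, hφ⟩ := exists_linearMap_eqOn_of_compatible annN_mono htor (fun m => B (w m))
    fun m v hv => by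
      rw [← sub_eq_zero, ← LinearMap.sub_apply, ← map_sub]
      exact hB.apply_eq_zero (hw m) hv
  obtain ⟨x, rfl⟩ := hbij.2 φ
  refine ⟨x, fun m => (hB.mem_nPow_iff hbij).mpr ?_⟩
  rw [Submodule.mem_dualAnnihilator]
  intro v hv
  rw [map_sub, LinearMap.sub_apply, hφ m v hv, sub_self]

theorem exists_eq_apply_of_nPow_le_ker [FiniteDimensional k L]
    [FiniteDimensional k (annN k L V 1)] (hB : IsContragredient L B)
    (hbij : Function.Bijective B) {Φ : Dual k W} {m : ℕ} (hΦ : nPow k L W m ≤ LinearMap.ker Φ) :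
    ∃ v : V, ∀ w, Φ w = B w v := by
  have : FiniteDimensional k (annN k L V m) := finiteDimensional_annN m
  let e := LinearEquiv.ofBijective B hbij
  obtain ⟨v, -, hv⟩ := (annN k L V m).exists_mem_forall_eq_apply_of_dualAnnihilator_le_ker
    (Φ ∘ₗ e.symm.toLinearMap) fun χ hχ =>
      hΦ ((hB.mem_nPow_iff hbij).mpr (by convert hχ; exact e.apply_symm_apply χ))
  exact ⟨v, fun w => by simpa [e] using hv (B w)⟩

end IsContragredient

end Pairing

theorem stmt9_general (k : Type) [Field k]
    (L : Type) [LieRing L] [LieAlgebra k L] [FiniteDimensional k L]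
    (V : Type) [AddCommGroup V] [Module (UniversalEnvelopingAlgebra k L) V]
    [Module k V] [IsScalarTower k (UniversalEnvelopingAlgebra k L) V]
    (W : Type) [AddCommGroup W] [Module (UniversalEnvelopingAlgebra k L) W]
    [Module k W] [IsScalarTower k (UniversalEnvelopingAlgebra k L) W]
    -- `V ∈ M_tor(n)`
    (htor : ∀ v : V, ∃ m : ℕ, v ∈ annN k L V m)
    (hfd : FiniteDimensional k (annN k L V 1))
    -- `W` is the full dual of `V` with the contragredient action
    (B : W →ₗ[k] Module.Dual k V) (hB : Function.Bijective B)
    (hContra : ∀ (x : L) (w : W) (v : V),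
      B ((ι k x : UniversalEnvelopingAlgebra k L) • w) v
        = - B w ((ι k x : UniversalEnvelopingAlgebra k L) • v)) :
    -- `W ∈ M_com(n)`: `W/nW` finite-dimensional, and `W` separated and complete
    (FiniteDimensional k (W ⧸ nPow k L W 1)) ∧
    (∀ w : ℕ → W, IsCauchySeq k L w → ∃! x : W, ∀ m : ℕ, x - w m ∈ nPow k L W m) ∧
    -- evaluation lands in the continuous dual of `W`
    (∀ v : V, ∃ m : ℕ, ∀ w ∈ nPow k L W m, B w v = 0) ∧
    -- and identifies `V` with the continuous dual of `W`: injectivity and surjectivity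
    (∀ v : V, (∀ w : W, B w v = 0) → v = 0) ∧
    (∀ Φ : Module.Dual k W, (∃ m : ℕ, ∀ w ∈ nPow k L W m, Φ w = 0) →
      ∃ v : V, ∀ w : W, Φ w = B w v) := by
  have hC : IsContragredient L B := hContra
  refine ⟨hC.finiteDimensional_quotient_nPow hB 1, fun w hw => ?_, fun v => ?_,
    fun v hv => ?_, fun Φ ⟨m, hΦ⟩ => hC.exists_eq_apply_of_nPow_le_ker hB hΦ⟩
  · obtain ⟨x, hx⟩ := hC.exists_forall_sub_mem_nPow htor hB hw
    refine ⟨x, hx, fun y hy => sub_eq_zero.mp ?_⟩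
    exact hC.eq_zero_of_forall_mem_nPow htor hB.1 fun m => by simpa using sub_mem (hy m) (hx m)
  · obtain ⟨m, hv⟩ := htor v
    exact ⟨m, fun w hw => hC.apply_eq_zero hw hv⟩
  · refine (forall_dual_apply_eq_zero_iff k v).mp fun φ => ?_
    obtain ⟨w, rfl⟩ := hB.2 φ
    exact hv w

theorem stmt9 (k : Type) [Field k] [CharZero k]
    (L : Type) [LieRing L] [LieAlgebra k L] [FiniteDimensional k L]
    [LieRing.IsNilpotent L]
    (V : Type) [AddCommGroup V] [Module (UniversalEnvelopingAlgebra k L) V]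
    [Module k V] [IsScalarTower k (UniversalEnvelopingAlgebra k L) V]
    (W : Type) [AddCommGroup W] [Module (UniversalEnvelopingAlgebra k L) W]
    [Module k W] [IsScalarTower k (UniversalEnvelopingAlgebra k L) W]
    -- `V ∈ M_tor(n)`
    (htor : ∀ v : V, ∃ m : ℕ, v ∈ annN k L V m)
    (hfd : FiniteDimensional k (annN k L V 1))
    -- `W` is the full dual of `V` with the contragredient action
    (B : W →ₗ[k] Module.Dual k V) (hB : Function.Bijective B)
    (hContra : ∀ (x : L) (w : W) (v : V),
      B ((ι k x : UniversalEnvelopingAlgebra k L) • w) v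
        = - B w ((ι k x : UniversalEnvelopingAlgebra k L) • v)) :
    -- `W ∈ M_com(n)`: `W/nW` finite-dimensional, and `W` separated and complete
    (FiniteDimensional k (W ⧸ nPow k L W 1)) ∧
    (∀ w : ℕ → W, IsCauchySeq k L w → ∃! x : W, ∀ m : ℕ, x - w m ∈ nPow k L W m) ∧
    -- evaluation lands in the continuous dual of `W`
    (∀ v : V, ∃ m : ℕ, ∀ w ∈ nPow k L W m, B w v = 0) ∧
    -- and identifies `V` with the continuous dual of `W`: injectivity and surjectivity
    (∀ v : V, (∀ w : W, B w v = 0) → v = 0) ∧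
    (∀ Φ : Module.Dual k W, (∃ m : ℕ, ∀ w ∈ nPow k L W m, Φ w = 0) →
      ∃ v : V, ∀ w : W, Φ w = B w v) :=
  stmt9_general k L V W htor hfd B hB hContra
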